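/- Let A be an n×n real symmetric matrix with spectral decomposition A = Σ_i ω_i φ_i φ_i^⊤, and suppose for each i ∈ B the vectors φ̃_i = Σ_{j∈B} γ_{ij} φ_j satisfy Σ_{i∈B} ω_i γ_{ij} γ_{ik} = 0 for j ≠ k. Then the reconstructed matrix Ã = A + Σ_{i∈B}[(Σ_{j∈B} ω_j γ_{ji}²) − ω_i]·φ_i φ_i^⊤ equals Σ_{i∉B} ω_i φ_i φ_i^⊤ + Σ_{i∈B} ω_i φ̃_i φ̃_i^⊤. -/

import Mathlib

open Matrix BigOperators

namespace Matrix

variable {R ι κ m n : Type*}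

theorem vecMulVec_sum_sum [NonUnitalNonAssocSemiring R] (s : Finset ι) (t : Finset κ)
    (u : ι → m → R) (w : κ → n → R) :
    vecMulVec (∑ j ∈ s, u j) (∑ k ∈ t, w k) = ∑ j ∈ s, ∑ k ∈ t, vecMulVec (u j) (w k) := by
  ext a b
  simp only [vecMulVec_apply, Finset.sum_apply, Matrix.sum_apply, Finset.sum_mul_sum]

/-- After expansion, `v j v kᵀ` carries the coefficient `∑ i, ω i γ i j γ i k`, which the
cross-term condition kills off the diagonal. -/
theorem sum_smul_vecMulVec_sum_smul_of_cross_eq_zero [CommSemiring R] (s : Finset ι)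
    (ω : ι → R) (γ : ι → ι → R) (v : ι → m → R)
    (hcross : ∀ j ∈ s, ∀ k ∈ s, j ≠ k → ∑ i ∈ s, ω i * γ i j * γ i k = 0) :
    ∑ i ∈ s, ω i • vecMulVec (∑ j ∈ s, γ i j • v j) (∑ k ∈ s, γ i k • v k)
      = ∑ j ∈ s, (∑ i ∈ s, ω i * γ i j ^ 2) • vecMulVec (v j) (v j) := by
  have hexpand : ∀ i, ω i • vecMulVec (∑ j ∈ s, γ i j • v j) (∑ k ∈ s, γ i k • v k)
      = ∑ j ∈ s, ∑ k ∈ s, (ω i * γ i j * γ i k) • vecMulVec (v j) (v k) := fun i => by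
    simp only [vecMulVec_sum_sum, smul_vecMulVec, vecMulVec_smul, Finset.smul_sum, smul_smul]
    refine Finset.sum_congr rfl fun j _ => Finset.sum_congr rfl fun k _ => ?_
    rw [mul_right_comm, mul_assoc]
  simp only [hexpand]
  rw [Finset.sum_comm]
  refine Finset.sum_congr rfl fun j hj => ?_
  rw [Finset.sum_comm, Finset.sum_eq_single_of_mem j hj fun k hk hkj => by
    rw [← Finset.sum_smul, hcross j hj k hk hkj.symm, zero_smul]]
  simp only [← Finset.sum_smul, mul_assoc, ← sq]

end Matrix

theorem eq3_reconstruction_general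
    (n : ℕ) (A : Matrix (Fin n) (Fin n) ℝ)
    (ω : Fin n → ℝ) (φ : Fin n → (Fin n → ℝ))
    (hdec : A = ∑ i, ω i • vecMulVec (φ i) (φ i))
    (B : Finset (Fin n)) (γ : Fin n → Fin n → ℝ) (φt : Fin n → (Fin n → ℝ))
    (hφt : ∀ i ∈ B, φt i = ∑ j ∈ B, γ i j • φ j)
    (hcross : ∀ j ∈ B, ∀ k ∈ B, j ≠ k → ∑ i ∈ B, ω i * γ i j * γ i k = 0) :
    A + (∑ i ∈ B, ((∑ j ∈ B, ω j * γ j i ^ 2) - ω i) • vecMulVec (φ i) (φ i))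
      = (∑ i ∈ Bᶜ, ω i • vecMulVec (φ i) (φ i))
        + ∑ i ∈ B, ω i • vecMulVec (φt i) (φt i) := by
  have hmix : ∑ i ∈ B, ω i • vecMulVec (φt i) (φt i)
      = ∑ i ∈ B, (∑ j ∈ B, ω j * γ j i ^ 2) • vecMulVec (φ i) (φ i) := by
    rw [Finset.sum_congr rfl fun i hi => by rw [hφt i hi]]
    exact sum_smul_vecMulVec_sum_smul_of_cross_eq_zero B ω γ φ hcross
  rw [hmix, hdec, ← Finset.sum_compl_add_sum B, add_assoc, ← Finset.sum_add_distrib]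
  simp only [← add_smul, add_sub_cancel]

/-- For symmetric `A = ∑ i, ω i • φ i φ iᵀ` with `φ̃ i = ∑_{j∈B} γ i j • φ j`
(`i ∈ B`) satisfying the vanishing cross-term condition, the Eq.(3) reconstruction
`Ã = A + ∑_{i∈B} ((∑_{j∈B} ω j γ j i ²) - ω i) • φ i φ iᵀ`
equals `∑_{i∉B} ω i • φ i φ iᵀ + ∑_{i∈B} ω i • φ̃ i φ̃ iᵀ`. -/
theorem eq3_reconstruction
    (n : ℕ) (A : Matrix (Fin n) (Fin n) ℝ) (hA : A.IsSymm)
    (ω : Fin n → ℝ) (φ : Fin n → (Fin n → ℝ))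
    (horth : ∀ i j, φ i ⬝ᵥ φ j = if i = j then (1 : ℝ) else 0)
    (hdec : A = ∑ i, ω i • vecMulVec (φ i) (φ i))
    (B : Finset (Fin n)) (γ : Fin n → Fin n → ℝ) (φt : Fin n → (Fin n → ℝ))
    (hφt : ∀ i ∈ B, φt i = ∑ j ∈ B, γ i j • φ j)
    (hcross : ∀ j ∈ B, ∀ k ∈ B, j ≠ k → ∑ i ∈ B, ω i * γ i j * γ i k = 0) :
    A + (∑ i ∈ B, ((∑ j ∈ B, ω j * γ j i ^ 2) - ω i) • vecMulVec (φ i) (φ i))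
      = (∑ i ∈ Bᶜ, ω i • vecMulVec (φ i) (φ i))
        + ∑ i ∈ B, ω i • vecMulVec (φt i) (φt i) :=
  eq3_reconstruction_general n A ω φ hdec B γ φt hφt hcross
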